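/- Stability of re-orthonormalized bases (deterministic matrix lemma used in the proof of Lemma A.3(b)). Let U be a T×a real matrix and V a T×b real matrix with spectral norms ‖U‖₂ ≤ 1 and ‖V‖₂ ≤ 1, and let P be any b×a real matrix. Then ‖(U + VP)(I_a + P'P)^{-1/2} − U‖₂ ≤ 2‖P‖₂. In particular, if U and V have orthonormal columns, the re-orthonormalized perturbed basis (U + VP)(I_a + P'P)^{-1/2} differs from U in spectral norm by at most 2‖P‖₂. -/

import Mathlib

/-!
`Q = (I + PᴴP)^{-1/2}` is the function `t ↦ t^{-1/2}` of the self-adjoint matrix `I + PᴴP`, whose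
spectrum lies in `[1, 1 + ‖P‖²]` because `0 ≤ PᴴP` and `‖PᴴP‖ = ‖P‖²`. The functional calculus is
isometric for the operator norm, so `‖Q‖ ≤ 1`, and `‖I - Q‖ ≤ ‖P‖` because
`0 ≤ 1 - t^{-1/2} ≤ √t - 1 ≤ ‖P‖` on that interval. Finally
`(U + VP)Q - U = U(Q - I) + V(PQ)`, and each term has norm at most `‖P‖`.
-/

open Matrix

noncomputable section

/-- Spectral norm of a real matrix: the operator norm of the induced linear map between
Euclidean spaces. -/
def specNorm {m p : Type*} [Fintype m] [Fintype p] [DecidableEq p] (A : Matrix m p ℝ) : ℝ :=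
  ‖LinearMap.toContinuousLinearMap (Matrix.toEuclideanLin A)‖

/-- `(I + PᴴP)^{-1/2}`: the inverse of the positive-semidefinite square root of
`I + PᴴP` (over `ℝ`, `Pᴴ = P'`). -/
def invSqrtOnePlus {a b : Type*} [Fintype a] [Fintype b] [DecidableEq a]
    (P : Matrix b a ℝ) : Matrix a a ℝ :=
  (let hA := (Matrix.PosSemidef.add Matrix.PosSemidef.one
      (Matrix.posSemidef_conjTranspose_mul_self P));
    hA.1.eigenvectorUnitary.1 * diagonal ((↑) ∘ Real.sqrt ∘ hA.1.eigenvalues) *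
      (star hA.1.eigenvectorUnitary : Matrix a a ℝ))⁻¹

open scoped Matrix.Norms.L2Operator

lemma Real.abs_one_sub_inv_sqrt_le {t p : ℝ} (hp : 0 ≤ p) (h1 : 1 ≤ t) (h2 : t ≤ 1 + p ^ 2) :
    |1 - (√t)⁻¹| ≤ p := by
  have hs1 : 1 ≤ √t := Real.one_le_sqrt.mpr h1
  have hs2 : √t ≤ 1 + p := Real.sqrt_le_iff.mpr ⟨by positivity, by nlinarith⟩
  rw [abs_of_nonneg (sub_nonneg.mpr (inv_le_one_of_one_le₀ hs1))]
  have h_amgm : 1 - (√t)⁻¹ ≤ √t - 1 := by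
    rw [sub_le_sub_iff, ← sub_nonneg]
    field_simp
    nlinarith
  linarith

variable {m n : Type*} [Fintype m] [Fintype n] [DecidableEq n]

lemma Matrix.spectrum_one_add_conjTranspose_mul_self_subset_Icc (P : Matrix m n ℝ) :
    spectrum ℝ (1 + Pᴴ * P) ⊆ Set.Icc 1 (1 + ‖P‖ ^ 2) := by
  intro x hx
  -- `spectrum.norm_le_norm_of_mem` needs `‖1‖ = 1`, which fails for empty `n`.
  cases isEmpty_or_nonempty n with
  | inl _ => simp [spectrum.of_subsingleton] at hx
  | inr _ =>
    rw [← sub_add_cancel x 1, spectrum.add_mem_iff, map_one, neg_add_cancel_left] at hx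
    have h_nonneg : 0 ≤ x - 1 :=
      (posSemidef_iff_isHermitian_and_spectrum_nonneg.mp (posSemidef_conjTranspose_mul_self P)).2 hx
    have h_le : ‖x - 1‖ ≤ ‖Pᴴ * P‖ := spectrum.norm_le_norm_of_mem hx
    rw [l2_opNorm_conjTranspose_mul_self, Real.norm_of_nonneg h_nonneg] at h_le
    constructor <;> nlinarith

lemma specNorm_eq_l2_opNorm (A : Matrix m n ℝ) : specNorm A = ‖A‖ := rfl

lemma invSqrtOnePlus_eq_cfc (P : Matrix m n ℝ) :
    invSqrtOnePlus P = cfc (fun x ↦ (√x)⁻¹) (1 + Pᴴ * P) := by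
  have hH := isHermitian_one.add (isHermitian_conjTranspose_mul_self P)
  have h_sqrt_ne : ∀ x ∈ spectrum ℝ (1 + Pᴴ * P), √x ≠ 0 := fun x hx ↦ Real.sqrt_ne_zero'.mpr
    (zero_lt_one.trans_le (spectrum_one_add_conjTranspose_mul_self_subset_Icc P hx).1)
  rw [cfc_inv Real.sqrt _ h_sqrt_ne, ← nonsing_inv_eq_ringInverse, hH.cfc_eq]
  rfl

lemma norm_invSqrtOnePlus_le_one (P : Matrix m n ℝ) : ‖invSqrtOnePlus P‖ ≤ 1 := by
  rw [invSqrtOnePlus_eq_cfc]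
  refine norm_cfc_le zero_le_one fun x hx ↦ ?_
  have h1 := (spectrum_one_add_conjTranspose_mul_self_subset_Icc P hx).1
  rw [Real.norm_of_nonneg (by positivity)]
  exact inv_le_one_of_one_le₀ (Real.one_le_sqrt.mpr h1)

lemma norm_one_sub_invSqrtOnePlus_le (P : Matrix m n ℝ) : ‖1 - invSqrtOnePlus P‖ ≤ ‖P‖ := by
  have hA : IsSelfAdjoint (1 + Pᴴ * P) :=
    isHermitian_one.add (isHermitian_conjTranspose_mul_self P)
  have h_eq : 1 - invSqrtOnePlus P = cfc (fun x ↦ 1 - (√x)⁻¹) (1 + Pᴴ * P) := by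
    rw [invSqrtOnePlus_eq_cfc, cfc_sub (fun _ ↦ 1) (fun x ↦ (√x)⁻¹) _ continuousOn_const
      (finite_real_spectrum.continuousOn _), cfc_const_one ℝ _ hA]
  rw [h_eq]
  refine norm_cfc_le (norm_nonneg P) fun x hx ↦ ?_
  obtain ⟨h1, h2⟩ := spectrum_one_add_conjTranspose_mul_self_subset_Icc P hx
  exact Real.abs_one_sub_inv_sqrt_le (norm_nonneg P) h1 h2

/-- **Stability of re-orthonormalized bases.**  If `U` is `T × a` and `V` is `T × b` with
`‖U‖₂ ≤ 1` and `‖V‖₂ ≤ 1`, then for any `b × a` matrix `P`,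
`‖(U + VP)(I + P'P)^{-1/2} - U‖₂ ≤ 2‖P‖₂`. -/
theorem reorthonormalized_basis_stability {T a b : ℕ}
    (U : Matrix (Fin T) (Fin a) ℝ) (V : Matrix (Fin T) (Fin b) ℝ)
    (P : Matrix (Fin b) (Fin a) ℝ)
    (hU : specNorm U ≤ 1) (hV : specNorm V ≤ 1) :
    specNorm ((U + V * P) * invSqrtOnePlus P - U) ≤ 2 * specNorm P := by
  simp only [specNorm_eq_l2_opNorm] at hU hV ⊢
  set Q := invSqrtOnePlus P
  have h_split : (U + V * P) * Q - U = U * (Q - 1) + V * (P * Q) := by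
    rw [Matrix.add_mul, Matrix.mul_sub, Matrix.mul_one, Matrix.mul_assoc]
    abel
  have hQ_sub : ‖Q - 1‖ ≤ ‖P‖ := norm_sub_rev Q 1 ▸ norm_one_sub_invSqrtOnePlus_le P
  have hPQ : ‖P * Q‖ ≤ ‖P‖ := (l2_opNorm_mul P Q).trans <|
    mul_le_of_le_one_right (norm_nonneg P) (norm_invSqrtOnePlus_le_one P)
  calc ‖(U + V * P) * Q - U‖
      ≤ ‖U‖ * ‖Q - 1‖ + ‖V‖ * ‖P * Q‖ :=
        h_split ▸ norm_add_le_of_le (l2_opNorm_mul _ _) (l2_opNorm_mul _ _)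
    _ ≤ 1 * ‖P‖ + 1 * ‖P‖ := by gcongr
    _ = 2 * ‖P‖ := by ring
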